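/- Any complete set of two-qubit product rays contains exactly one all-north ray: every orthonormal basis of ℂ² ⊗ ℂ² consisting of four product vectors contains exactly one all-north element. -/

import Mathlib

open scoped InnerProductSpace
open MeasureTheory

noncomputable section

abbrev Qubit : Type := EuclideanSpace ℂ (Fin 2)
abbrev NQubit (n : ℕ) : Type := EuclideanSpace ℂ (Fin n → Fin 2)

/-- The product vector `ψ₁ ⊗ ⋯ ⊗ ψₙ` in `(ℂ²)^{⊗n}`, modelled concretely as
`EuclideanSpace ℂ (Fin n → Fin 2)`; its inner products satisfy
`⟨tens ψ, tens χ⟩ = ∏ j, ⟨ψ j, χ j⟩`. -/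
noncomputable def tens {n : ℕ} (ψ : Fin n → Qubit) : NQubit n :=
  WithLp.toLp 2 (fun f => ∏ j, ψ j (f j))

/-- A vector of `(ℂ²)^{⊗n}` is a product vector if it is of the form `ψ₁ ⊗ ⋯ ⊗ ψₙ`. -/
def IsProduct {n : ℕ} (v : NQubit n) : Prop := ∃ ψ : Fin n → Qubit, v = tens ψ

/-- A finite set of vectors forming an orthonormal basis of `H`. -/
def IsONBasis {H : Type*} [NormedAddCommGroup H] [InnerProductSpace ℂ H]
    (B : Finset H) : Prop :=
  Orthonormal ℂ (fun v : B => (v : H)) ∧ Submodule.span ℂ (B : Set H) = ⊤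

/-- A KS-colouring of a set `S` of unit vectors: a `{0,1}`-valued map (modelled as a
predicate, `c v` meaning value `1`) such that every orthonormal basis contained in `S`
has exactly one element of value `1`, and no two mutually orthogonal elements of `S`
both have value `1`. -/
def IsKSColouring {H : Type*} [NormedAddCommGroup H] [InnerProductSpace ℂ H]
    (S : Set H) (c : H → Prop) : Prop :=
  (∀ B : Finset H, ↑B ⊆ S → IsONBasis B → ∃! v, v ∈ B ∧ c v) ∧
  (∀ ψ ∈ S, ∀ χ ∈ S, ⟪ψ, χ⟫_ℂ = 0 → ¬(c ψ ∧ c χ))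

/-- First coordinate of the Bloch vector of a qubit vector. -/
def blochX (ψ : Qubit) : ℝ := 2 * ((starRingEnd ℂ) (ψ 0) * ψ 1).re
/-- Second coordinate of the Bloch vector of a qubit vector. -/
def blochY (ψ : Qubit) : ℝ := 2 * ((starRingEnd ℂ) (ψ 0) * ψ 1).im
/-- Third coordinate of the Bloch vector of a qubit vector. -/
def blochZ (ψ : Qubit) : ℝ := Complex.normSq (ψ 0) - Complex.normSq (ψ 1)

/-- A qubit unit vector is north if its Bloch vector `(x,y,z)` satisfies `z > 0`, or
`z = 0 ∧ y < 0`, or `z = 0 ∧ y = 0 ∧ x > 0`. -/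
def IsNorth (ψ : Qubit) : Prop :=
  0 < blochZ ψ ∨ (blochZ ψ = 0 ∧ blochY ψ < 0) ∨
    (blochZ ψ = 0 ∧ blochY ψ = 0 ∧ 0 < blochX ψ)

/-- An `n`-qubit product vector is all-north if it factors as a product of north
qubit vectors. -/
def AllNorth {n : ℕ} (v : NQubit n) : Prop :=
  ∃ ψ : Fin n → Qubit, v = tens ψ ∧ ∀ j, IsNorth (ψ j)

/-!
Orthogonal qubits have antipodal Bloch vectors, and `IsNorth` is positivity of the Bloch vector
in a lexicographic order on `ℝ³`; so of two nonzero orthogonal qubits exactly one is north.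
Distinct elements of an orthonormal product basis of `(ℂ²)^{⊗n}` have orthogonal factors in some
slot, hence the set of slots carrying a north factor is injective on the basis. A basis has `2ⁿ`
elements, so this map is a bijection onto all subsets of the slots, and the all-north vectors are
the preimage of the full set. Factors are determined up to nonzero scalars, which do not affect
northness, so the set of north slots does not depend on the factorisation chosen.
-/

def blochLex (ψ : Qubit) : ℝ ×ₗ ℝ ×ₗ ℝ := toLex (blochZ ψ, toLex (-blochY ψ, blochX ψ))

theorem isNorth_iff_blochLex_pos (ψ : Qubit) : IsNorth ψ ↔ 0 < blochLex ψ := by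
  simp only [IsNorth, blochLex, ← toLex_zero, Prod.Lex.toLex_lt_toLex, Prod.fst_zero,
    Prod.snd_zero, neg_pos, neg_eq_zero, eq_comm (a := (0 : ℝ)), and_or_left]

theorem blochX_sq_add_blochY_sq_add_blochZ_sq (ψ : Qubit) :
    blochX ψ ^ 2 + blochY ψ ^ 2 + blochZ ψ ^ 2 = (‖ψ‖ ^ 2) ^ 2 := by
  rw [EuclideanSpace.norm_sq_eq, Fin.sum_univ_two, Complex.sq_norm, Complex.sq_norm]
  have h := Complex.normSq_mul ((starRingEnd ℂ) (ψ 0)) (ψ 1)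
  rw [Complex.normSq_conj, Complex.normSq_apply] at h
  simp only [blochX, blochY, blochZ]
  nlinarith [h]

theorem blochLex_ne_zero {ψ : Qubit} (hψ : ψ ≠ 0) : blochLex ψ ≠ 0 := by
  intro h
  simp only [blochLex, ← toLex_zero, toLex_inj, Prod.ext_iff, Prod.fst_zero, Prod.snd_zero,
    neg_eq_zero] at h
  have hsq := blochX_sq_add_blochY_sq_add_blochZ_sq ψ
  rw [h.1, h.2.1, h.2.2] at hsq
  exact hψ (by simpa using hsq.symm)

theorem conj_smul_apply_mul_smul_apply (c : ℂ) (ψ : Qubit) (i j : Fin 2) :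
    (starRingEnd ℂ) ((c • ψ) i) * (c • ψ) j
      = (Complex.normSq c : ℂ) * ((starRingEnd ℂ) (ψ i) * ψ j) := by
  rw [PiLp.smul_apply, PiLp.smul_apply, smul_eq_mul, smul_eq_mul, map_mul,
    Complex.normSq_eq_conj_mul_self]
  ring

theorem blochX_smul (c : ℂ) (ψ : Qubit) : blochX (c • ψ) = Complex.normSq c * blochX ψ := by
  rw [blochX, blochX, conj_smul_apply_mul_smul_apply, Complex.re_ofReal_mul]
  ring

theorem blochY_smul (c : ℂ) (ψ : Qubit) : blochY (c • ψ) = Complex.normSq c * blochY ψ := by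
  rw [blochY, blochY, conj_smul_apply_mul_smul_apply, Complex.im_ofReal_mul]
  ring

theorem blochZ_smul (c : ℂ) (ψ : Qubit) : blochZ (c • ψ) = Complex.normSq c * blochZ ψ := by
  simp only [blochZ, PiLp.smul_apply, smul_eq_mul, Complex.normSq_mul]
  ring

theorem isNorth_smul_iff {c : ℂ} (hc : c ≠ 0) (ψ : Qubit) : IsNorth (c • ψ) ↔ IsNorth ψ := by
  have hk := Complex.normSq_pos.2 hc
  simp [IsNorth, blochX_smul, blochY_smul, blochZ_smul, mul_pos_iff_of_pos_left hk, mul_neg_iff,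
    hk, hk.ne', hk.not_gt]

def qubitPerp (ψ : Qubit) : Qubit := !₂[-(starRingEnd ℂ) (ψ 1), (starRingEnd ℂ) (ψ 0)]

theorem blochLex_qubitPerp (ψ : Qubit) : blochLex (qubitPerp ψ) = -blochLex ψ := by
  have hw : (starRingEnd ℂ) (qubitPerp ψ 0) * qubitPerp ψ 1
      = -((starRingEnd ℂ) (ψ 0) * ψ 1) := by
    simp only [qubitPerp, PiLp.toLp_apply, Matrix.cons_val_zero, Matrix.cons_val_one,
      map_neg, Complex.conj_conj]
    ring
  rw [blochLex, blochLex, blochX, blochX, blochY, blochY, hw]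
  simp only [Complex.neg_re, Complex.neg_im, ← toLex_neg, Prod.neg_mk, blochZ, qubitPerp,
    PiLp.toLp_apply, Matrix.cons_val_zero, Matrix.cons_val_one, Complex.normSq_neg,
    Complex.normSq_conj, neg_sub, mul_neg]

theorem isNorth_qubitPerp_iff {ψ : Qubit} (hψ : ψ ≠ 0) : IsNorth (qubitPerp ψ) ↔ ¬ IsNorth ψ := by
  rw [isNorth_iff_blochLex_pos, isNorth_iff_blochLex_pos, blochLex_qubitPerp, neg_pos, not_lt,
    (blochLex_ne_zero hψ).le_iff_lt]

theorem exists_eq_smul_qubitPerp_of_inner_eq_zero {ψ χ : Qubit} (hψ : ψ ≠ 0) (h : ⟪ψ, χ⟫_ℂ = 0) :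
    ∃ c : ℂ, χ = c • qubitPerp ψ := by
  simp only [PiLp.inner_apply, RCLike.inner_apply, Fin.sum_univ_two] at h
  have hψ' : (starRingEnd ℂ) (ψ 0) ≠ 0 ∨ (starRingEnd ℂ) (ψ 1) ≠ 0 := by
    by_contra! h0
    simp only [map_eq_zero] at h0
    exact hψ (by ext i; fin_cases i <;> simp [h0.1, h0.2])
  rcases hψ' with h0 | h1
  · refine ⟨χ 1 / (starRingEnd ℂ) (ψ 0), PiLp.ext fun i => ?_⟩
    fin_cases i <;>
      simp only [Fin.zero_eta, Fin.mk_one, Fin.isValue, qubitPerp, PiLp.smul_apply, smul_eq_mul,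
        Matrix.cons_val_zero, Matrix.cons_val_one, Matrix.cons_val_fin_one, mul_neg] <;>
      field_simp
    linear_combination h
  · refine ⟨-χ 0 / (starRingEnd ℂ) (ψ 1), PiLp.ext fun i => ?_⟩
    fin_cases i <;>
      simp only [Fin.zero_eta, Fin.mk_one, Fin.isValue, qubitPerp, PiLp.smul_apply, smul_eq_mul,
        Matrix.cons_val_zero, Matrix.cons_val_one, Matrix.cons_val_fin_one, mul_neg] <;>
      field_simp
    linear_combination h

theorem isNorth_iff_not_of_inner_eq_zero {ψ χ : Qubit} (hψ : ψ ≠ 0) (hχ : χ ≠ 0)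
    (h : ⟪ψ, χ⟫_ℂ = 0) : IsNorth χ ↔ ¬ IsNorth ψ := by
  obtain ⟨c, rfl⟩ := exists_eq_smul_qubitPerp_of_inner_eq_zero hψ h
  rw [isNorth_smul_iff (left_ne_zero_of_smul hχ), isNorth_qubitPerp_iff hψ]

section Tensor

variable {n : ℕ}

theorem inner_tens (ψ χ : Fin n → Qubit) :
    ⟪tens ψ, tens χ⟫_ℂ = ∏ j, ⟪ψ j, χ j⟫_ℂ := by
  simp only [PiLp.inner_apply, RCLike.inner_apply, tens]
  rw [Finset.prod_univ_sum, ← Fintype.piFinset_univ]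
  refine Finset.sum_congr rfl fun f _ => ?_
  rw [map_prod, ← Finset.prod_mul_distrib]

theorem ne_zero_of_tens_ne_zero {ψ : Fin n → Qubit} (h : tens ψ ≠ 0) (j : Fin n) :
    ψ j ≠ 0 := by
  intro hj
  refine h (PiLp.ext fun f => Finset.prod_eq_zero (Finset.mem_univ j) ?_)
  rw [hj, PiLp.zero_apply]

theorem tens_update_apply (ψ : Fin n → Qubit) (f : Fin n → Fin 2) (j : Fin n)
    (a : Fin 2) :
    tens ψ (Function.update f j a) = ψ j a * ∏ k ∈ Finset.univ.erase j, ψ k (f k) := by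
  rw [tens, PiLp.toLp_apply, ← Finset.mul_prod_erase _ _ (Finset.mem_univ j),
    Function.update_self]
  congr 1
  exact Finset.prod_congr rfl fun k hk => by rw [Function.update_of_ne (Finset.ne_of_mem_erase hk)]

theorem exists_smul_of_tens_eq {ψ φ : Fin n → Qubit} (h : tens ψ = tens φ)
    (hφ : tens φ ≠ 0) (j : Fin n) : ∃ c : ℂ, c ≠ 0 ∧ ψ j = c • φ j := by
  obtain ⟨f, hf⟩ : ∃ f, tens φ f ≠ 0 := by
    by_contra! hf
    exact hφ (PiLp.ext hf)
  set P := ∏ k ∈ Finset.univ.erase j, ψ k (f k)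
  set Q := ∏ k ∈ Finset.univ.erase j, φ k (f k)
  have hPQ : ∀ a, ψ j a * P = φ j a * Q := fun a => by
    rw [← tens_update_apply, ← tens_update_apply, h]
  have hf' : tens φ (Function.update f j (f j)) ≠ 0 := by rwa [Function.update_eq_self]
  rw [tens_update_apply] at hf'
  have hQ : Q ≠ 0 := right_ne_zero_of_mul hf'
  have hP : P ≠ 0 := right_ne_zero_of_mul (hPQ (f j) ▸ hf')
  refine ⟨Q / P, div_ne_zero hQ hP, PiLp.ext fun a => ?_⟩
  rw [PiLp.smul_apply, smul_eq_mul, div_mul_eq_mul_div, eq_div_iff hP, mul_comm Q, hPQ]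

theorem allNorth_tens_iff {ψ : Fin n → Qubit} (h : tens ψ ≠ 0) :
    AllNorth (tens ψ) ↔ ∀ j, IsNorth (ψ j) := by
  refine ⟨fun ⟨φ, hφ, hnorth⟩ j => ?_, fun hnorth => ⟨ψ, rfl, hnorth⟩⟩
  obtain ⟨c, hc, hψφ⟩ := exists_smul_of_tens_eq hφ (hφ ▸ h) j
  rw [hψφ, isNorth_smul_iff hc]
  exact hnorth j

theorem setOf_isNorth_ne_of_inner_tens_eq_zero {ψ φ : Fin n → Qubit}
    (hψ : tens ψ ≠ 0) (hφ : tens φ ≠ 0) (h : ⟪tens ψ, tens φ⟫_ℂ = 0) :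
    {j | IsNorth (ψ j)} ≠ {j | IsNorth (φ j)} := by
  rw [inner_tens] at h
  obtain ⟨j, -, hj⟩ := Finset.prod_eq_zero_iff.1 h
  intro hset
  have hanti := isNorth_iff_not_of_inner_eq_zero (ne_zero_of_tens_ne_zero hψ j)
    (ne_zero_of_tens_ne_zero hφ j) hj
  exact iff_not_self ((Set.ext_iff.1 hset j).trans hanti)

theorem existsUnique_allNorth_of_orthonormal (B : Finset (NQubit n))
    (hcard : B.card = 2 ^ n) (hB : Orthonormal ℂ (fun v : B => (v : NQubit n)))
    (hprod : ∀ v ∈ B, IsProduct v) :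
    ∃! v, v ∈ B ∧ AllNorth v := by
  classical
  choose ψ hψ using hprod
  have hne : ∀ v : B, tens (ψ v v.2) ≠ 0 := fun v => hψ v v.2 ▸ hB.ne_zero v
  let northSet : B → Set (Fin n) := fun v => {j | IsNorth (ψ v v.2 j)}
  have hinj : Function.Injective northSet := by
    intro v w hvw
    by_contra hvw'
    have h : ⟪(v : NQubit n), w⟫_ℂ = 0 := hB.2 hvw'
    rw [hψ v v.2, hψ w w.2] at h
    exact setOf_isNorth_ne_of_inner_tens_eq_zero (hne v) (hne w) h hvw
  have hbij : Function.Bijective northSet :=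
    (Fintype.bijective_iff_injective_and_card _).2 ⟨hinj, by simp [hcard, Fintype.card_set]⟩
  have hall : ∀ v : B, AllNorth (v : NQubit n) ↔ northSet v = Set.univ := fun v => by
    rw [hψ v v.2, allNorth_tens_iff (hne v), Set.eq_univ_iff_forall]
    rfl
  obtain ⟨v, hv, huniq⟩ := hbij.existsUnique Set.univ
  exact ⟨v, ⟨v.2, (hall v).2 hv⟩, fun w ⟨hw, hwn⟩ =>
    congrArg Subtype.val (huniq ⟨w, hw⟩ ((hall ⟨w, hw⟩).1 hwn))⟩

end Tensor

/-- every orthonormal basis of `ℂ² ⊗ ℂ²` consisting of four product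
vectors contains exactly one all-north element. -/
theorem two_qubit_product_basis_exactly_one_all_north
    (B : Finset (NQubit 2)) (hcard : B.card = 4) (hB : IsONBasis B)
    (hprod : ∀ v ∈ B, IsProduct v) :
    ∃! v, v ∈ B ∧ AllNorth v :=
  existsUnique_allNorth_of_orthonormal B hcard hB.1 hprod

end
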